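/- Let μ, ν ∈ ℝ be such that μ+ν and μ−ν are not negative odd integers, (μ+1)((μ+1)(μ+3) − ν²) ≥ 1/8, and μ(2e−1) − (1/4)e(e−1)|(μ−1)² − ν²| ≥ e³ − e² + 13e/4 − 4. Then the Alexander transform f_{μ,ν}(z) = ∫₀^z h_{μ,ν}(t)/t dt = z + ∑_{n≥1} ((−1/4)^n / ((n+1) ((μ−ν+3)/2)_n ((μ+ν+3)/2)_n)) z^{n+1} belongs to the class K_e of exponential convex functions. -/

import Mathlib

open Complex Metric Set

noncomputable def poch (x : ℂ) (n : ℕ) : ℂ := ∏ k ∈ Finset.range n, (x + k)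

/-- The class `P_e`: `p` is analytic on the unit disk, `p 0 = 1`, and `p` maps the
unit disk into `exp(𝔻)` (equivalently, `p` is subordinate to `exp`). -/
def memPe (p : ℂ → ℂ) : Prop :=
  AnalyticOnNhd ℂ p (Metric.ball 0 1) ∧ p 0 = 1 ∧
    ∀ z ∈ Metric.ball (0:ℂ) 1, p z ∈ Complex.exp '' Metric.ball 0 1

/-- The class `K_e` of exponential convex functions. -/
def memKe (f : ℂ → ℂ) : Prop :=
  AnalyticOnNhd ℂ f (Metric.ball 0 1) ∧ f 0 = 0 ∧ deriv f 0 = 1 ∧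
    (∀ z ∈ Metric.ball (0:ℂ) 1, deriv f z ≠ 0) ∧
    memPe (fun z => 1 + z * deriv (deriv f) z / deriv f z)

/-- The class `S*_e` of exponential starlike functions. -/
def memSe (f : ℂ → ℂ) : Prop :=
  AnalyticOnNhd ℂ f (Metric.ball 0 1) ∧ f 0 = 0 ∧ deriv f 0 = 1 ∧
    (∀ z ∈ Metric.ball (0:ℂ) 1, z ≠ 0 → f z ≠ 0) ∧
    memPe (fun z => if z = 0 then 1 else z * deriv f z / f z)

/-- The normalized Lommel function of the first kind
`h_{μ,ν}(z) = z + ∑_{n≥1} ((−1/4)^n / (((μ−ν+3)/2)_n ((μ+ν+3)/2)_n)) z^{n+1}`. -/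
noncomputable def lommelH (μ ν : ℝ) (z : ℂ) : ℂ :=
  z + ∑' n : ℕ, (-1/4 : ℂ) ^ (n + 1) /
    (poch (((μ - ν + 3) / 2 : ℝ) : ℂ) (n + 1) * poch (((μ + ν + 3) / 2 : ℝ) : ℂ) (n + 1)) *
      z ^ (n + 2)

/-!
With `x = (μ - ν + 3) / 2` and `y = (μ + ν + 3) / 2`, the hypotheses force `μ > 0`, hence
`x, y ≥ 0` and `x y ≥ 1`. Then `|(x)ₙ₊₁ (y)ₙ₊₁| ≥ n + 1`, so the coefficients `aₙ` of
`f(z) = z + ∑ aₙ z^(n+2)` satisfy `∑ (n+1)(n+2)|aₙ| ≤ ∑ 4^(-(n+1)) = 1/3`. On the unit disk this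
gives `|f' - 1| ≤ 1/3` and `|f''| ≤ 1/3`, so `w = 1 + z f''/f'` satisfies `|w - 1| ≤ 1/2`, and
then `|log w| ≤ (3/2)|w - 1| < 1`, i.e. `w ∈ exp 𝔻`.
-/

theorem mem_exp_image_ball_of_norm_sub_one_le {w : ℂ} (hw : ‖w - 1‖ ≤ 1 / 2) :
    w ∈ exp '' ball 0 1 := by
  have hw0 : w ≠ 0 := by
    rintro rfl
    norm_num at hw
  refine ⟨log w, ?_, exp_log hw0⟩
  have hlog := norm_log_one_add_half_le_self hw
  rw [add_sub_cancel] at hlog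
  rw [mem_ball_zero_iff]
  linarith

theorem hasDerivAt_tsum_mul_pow {c : ℕ → ℂ} (hc : Summable (‖c ·‖)) (k : ℕ) {z : ℂ}
    (hz : z ∈ ball (0 : ℂ) 1) :
    HasDerivAt (fun w ↦ ∑' n, c n * w ^ (n + k))
      (∑' n, c n * ((n + k : ℕ) * z ^ (n + k - 1))) z := by
  have hbound : ∀ n, ∀ w ∈ ball (0 : ℂ) 1, ‖c n * w ^ (n + k)‖ ≤ ‖c n‖ := fun n w hw ↦ by
    rw [norm_mul, norm_pow]
    exact mul_le_of_le_one_right (norm_nonneg _)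
      (pow_le_one₀ (norm_nonneg _) (mem_ball_zero_iff.mp hw).le)
  have hdiff : ∀ n, DifferentiableOn ℂ (fun w ↦ c n * w ^ (n + k)) (ball 0 1) := fun n ↦
    (by fun_prop : Differentiable ℂ fun w : ℂ ↦ c n * w ^ (n + k)).differentiableOn
  have hderiv := hasSum_deriv_of_summable_norm hc hdiff isOpen_ball hbound hz
  simp only [deriv_const_mul_field', deriv_pow_field] at hderiv
  rw [hderiv.tsum_eq]
  exact ((differentiableOn_tsum_of_summable_norm hc hdiff isOpen_ball hbound).differentiableAt
    (isOpen_ball.mem_nhds hz)).hasDerivAt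

section
variable {a : ℕ → ℂ} {z : ℂ}

theorem hasDerivAt_add_tsum_mul_pow (ha : Summable (‖a ·‖)) (hz : z ∈ ball (0 : ℂ) 1) :
    HasDerivAt (fun w ↦ w + ∑' n, a n * w ^ (n + 2))
      (1 + ∑' n, ((n + 2 : ℕ) * a n) * z ^ (n + 1)) z := by
  refine ((hasDerivAt_id z).add (hasDerivAt_tsum_mul_pow ha 2 hz)).congr_deriv ?_
  congr 1
  exact tsum_congr fun n ↦ by simp only [Nat.add_succ_sub_one]; ring

theorem deriv_deriv_add_tsum_mul_pow (ha : Summable fun n ↦ ‖((n + 2 : ℕ) : ℂ) * a n‖)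
    (hz : z ∈ ball (0 : ℂ) 1) :
    deriv (deriv fun w ↦ w + ∑' n, a n * w ^ (n + 2)) z =
      ∑' n, ((n + 1 : ℕ) * (n + 2 : ℕ) * a n) * z ^ n := by
  have ha' : Summable (‖a ·‖) := ha.of_nonneg_of_le (fun _ ↦ norm_nonneg _) fun n ↦ by
    rw [norm_mul, Complex.norm_natCast]
    exact le_mul_of_one_le_left (norm_nonneg _) (by norm_cast; omega)
  have hderiv : (deriv fun w ↦ w + ∑' n, a n * w ^ (n + 2)) =ᶠ[nhds z]
      fun w ↦ 1 + ∑' n, ((n + 2 : ℕ) * a n) * w ^ (n + 1) :=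
    Filter.eventually_of_mem (isOpen_ball.mem_nhds hz) fun w hw ↦
      (hasDerivAt_add_tsum_mul_pow ha' hw).deriv
  rw [hderiv.deriv_eq, ((hasDerivAt_tsum_mul_pow ha 1 hz).const_add 1).deriv]
  exact tsum_congr fun n ↦ by simp only [add_tsub_cancel_right]; ring
end

section
variable {a : ℕ → ℂ} (hs : Summable fun n : ℕ ↦ ((n : ℝ) + 1) * ((n : ℝ) + 2) * ‖a n‖)
include hs

theorem summable_norm_natCast_add_two_mul : Summable fun n ↦ ‖((n + 2 : ℕ) : ℂ) * a n‖ :=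
  hs.of_nonneg_of_le (fun _ ↦ norm_nonneg _) fun n ↦ by
    rw [norm_mul, Complex.norm_natCast, mul_assoc]
    push_cast
    exact le_mul_of_one_le_left (by positivity) (by linarith [n.cast_nonneg (α := ℝ)])

theorem summable_norm_of_summable_weighted : Summable (‖a ·‖) :=
  hs.of_nonneg_of_le (fun _ ↦ norm_nonneg _) fun n ↦ by
    exact le_mul_of_one_le_left (norm_nonneg _) (by nlinarith [n.cast_nonneg (α := ℝ)])

theorem norm_deriv_add_tsum_mul_pow_sub_one_le {z : ℂ} (hz : z ∈ ball (0 : ℂ) 1) :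
    ‖deriv (fun w ↦ w + ∑' n, a n * w ^ (n + 2)) z - 1‖ ≤
      ∑' n : ℕ, ((n : ℝ) + 1) * ((n : ℝ) + 2) * ‖a n‖ := by
  rw [(hasDerivAt_add_tsum_mul_pow (summable_norm_of_summable_weighted hs) hz).deriv,
    add_sub_cancel_left]
  refine tsum_of_norm_bounded hs.hasSum fun n ↦ ?_
  rw [norm_mul, norm_mul, norm_pow, Complex.norm_natCast]
  push_cast
  calc ((n : ℝ) + 2) * ‖a n‖ * ‖z‖ ^ (n + 1) ≤ ((n : ℝ) + 2) * ‖a n‖ :=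
        mul_le_of_le_one_right (by positivity)
          (pow_le_one₀ (norm_nonneg _) (mem_ball_zero_iff.mp hz).le)
    _ ≤ ((n : ℝ) + 1) * ((n : ℝ) + 2) * ‖a n‖ := by
        rw [mul_assoc]
        exact le_mul_of_one_le_left (by positivity) (by linarith [n.cast_nonneg (α := ℝ)])

theorem norm_deriv_deriv_add_tsum_mul_pow_le {z : ℂ} (hz : z ∈ ball (0 : ℂ) 1) :
    ‖deriv (deriv fun w ↦ w + ∑' n, a n * w ^ (n + 2)) z‖ ≤
      ∑' n : ℕ, ((n : ℝ) + 1) * ((n : ℝ) + 2) * ‖a n‖ := by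
  rw [deriv_deriv_add_tsum_mul_pow (summable_norm_natCast_add_two_mul hs) hz]
  refine tsum_of_norm_bounded hs.hasSum fun n ↦ ?_
  rw [norm_mul, norm_mul, norm_mul, norm_pow, Complex.norm_natCast, Complex.norm_natCast]
  push_cast
  exact mul_le_of_le_one_right (by positivity)
    (pow_le_one₀ (norm_nonneg _) (mem_ball_zero_iff.mp hz).le)

theorem memKe_add_tsum_mul_pow (hS : ∑' n : ℕ, ((n : ℝ) + 1) * ((n : ℝ) + 2) * ‖a n‖ ≤ 1 / 3) :
    memKe fun w ↦ w + ∑' n, a n * w ^ (n + 2) := by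
  set f := fun w ↦ w + ∑' n, a n * w ^ (n + 2)
  set S := ∑' n : ℕ, ((n : ℝ) + 1) * ((n : ℝ) + 2) * ‖a n‖
  have hf' : ∀ z ∈ ball (0 : ℂ) 1, HasDerivAt f _ z := fun z hz ↦
    hasDerivAt_add_tsum_mul_pow (summable_norm_of_summable_weighted hs) hz
  have hf : AnalyticOnNhd ℂ f (ball 0 1) :=
    DifferentiableOn.analyticOnNhd (fun z hz ↦ (hf' z hz).differentiableAt.differentiableWithinAt)
      isOpen_ball
  have hderiv_ge : ∀ z ∈ ball (0 : ℂ) 1, 1 - S ≤ ‖deriv f z‖ := fun z hz ↦ by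
    have := norm_deriv_add_tsum_mul_pow_sub_one_le hs hz
    have := norm_sub_norm_le (1 : ℂ) (deriv f z)
    rw [norm_sub_rev, norm_one] at this
    linarith
  have hderiv_ne : ∀ z ∈ ball (0 : ℂ) 1, deriv f z ≠ 0 := fun z hz h0 ↦ by
    have := hderiv_ge z hz
    rw [h0, norm_zero] at this
    linarith
  refine ⟨hf, by simp [f], by simpa using (hf' 0 (mem_ball_self one_pos)).deriv, hderiv_ne,
    analyticOnNhd_const.add ((analyticOnNhd_id.mul hf.deriv.deriv).div hf.deriv hderiv_ne),
    by simp, fun z hz ↦ mem_exp_image_ball_of_norm_sub_one_le ?_⟩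
  have hS0 : 0 ≤ S := tsum_nonneg fun n ↦ by positivity
  rw [add_sub_cancel_left, norm_div, norm_mul, div_le_iff₀ (by linarith [hderiv_ge z hz])]
  calc ‖z‖ * ‖deriv (deriv f) z‖ ≤ 1 * S := mul_le_mul (mem_ball_zero_iff.mp hz).le
        (norm_deriv_deriv_add_tsum_mul_pow_le hs hz) (norm_nonneg _) zero_le_one
    _ ≤ 1 / 2 * (1 - S) := by linarith
    _ ≤ 1 / 2 * ‖deriv f z‖ := by gcongr; exact hderiv_ge z hz

end

theorem norm_poch_ofReal {x : ℝ} (hx : 0 ≤ x) (n : ℕ) :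
    ‖poch x n‖ = ∏ k ∈ Finset.range n, (x + k) := by
  rw [poch, norm_prod]
  refine Finset.prod_congr rfl fun k _ ↦ ?_
  rw [← ofReal_natCast, ← ofReal_add, norm_real, Real.norm_of_nonneg (by positivity)]

theorem natCast_add_one_le_prod_mul {x y : ℝ} (hx : 0 ≤ x) (hy : 0 ≤ y) (hxy : 1 ≤ x * y)
    (n : ℕ) : (n : ℝ) + 1 ≤ ∏ k ∈ Finset.range (n + 1), (x + k) * (y + k) := by
  induction n with
  | zero => simpa using hxy
  | succ n ih =>
    rw [Finset.prod_range_succ]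
    push_cast
    have hn : (0 : ℝ) ≤ n := n.cast_nonneg
    have hfactor : ((n : ℝ) + 1) ^ 2 + 1 ≤ (x + (n + 1)) * (y + (n + 1)) := by nlinarith
    nlinarith

/-- The coefficient of `z ^ (n + 2)` in `f_{μ,ν}`, with `x = (μ - ν + 3) / 2` and
`y = (μ + ν + 3) / 2`. -/
noncomputable def alexanderLommelCoeff (x y : ℝ) (n : ℕ) : ℂ :=
  (-1 / 4 : ℂ) ^ (n + 1) / (((n : ℂ) + 2) * poch x (n + 1) * poch y (n + 1))

theorem weighted_norm_alexanderLommelCoeff_le {x y : ℝ} (hx : 0 ≤ x) (hy : 0 ≤ y)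
    (hxy : 1 ≤ x * y) (n : ℕ) :
    ((n : ℝ) + 1) * ((n : ℝ) + 2) * ‖alexanderLommelCoeff x y n‖ ≤ (1 / 4) ^ (n + 1) := by
  have hprod := natCast_add_one_le_prod_mul hx hy hxy n
  have hn2 : ‖(n : ℂ) + 2‖ = (n : ℝ) + 2 := by exact_mod_cast Complex.norm_natCast (n + 2)
  have hprod_pos : 0 < ∏ k ∈ Finset.range (n + 1), (x + k) * (y + k) :=
    (by positivity : (0 : ℝ) < n + 1).trans_le hprod
  rw [alexanderLommelCoeff, mul_assoc ((n : ℂ) + 2), norm_div, norm_mul, norm_mul, hn2,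
    norm_poch_ofReal hx, norm_poch_ofReal hy, ← Finset.prod_mul_distrib, norm_pow, norm_div,
    norm_neg, norm_one, Complex.norm_ofNat, mul_div_assoc',
    div_le_iff₀ (mul_pos (by positivity) hprod_pos)]
  calc ((n : ℝ) + 1) * ((n : ℝ) + 2) * (1 / 4) ^ (n + 1)
      = (1 / 4) ^ (n + 1) * ((n : ℝ) + 2) * ((n : ℝ) + 1) := by ring
    _ ≤ (1 / 4) ^ (n + 1) * ((n : ℝ) + 2) * ∏ k ∈ Finset.range (n + 1), (x + k) * (y + k) := by
      gcongr
    _ = _ := by ring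

theorem memKe_alexanderLommel {x y : ℝ} (hx : 0 ≤ x) (hy : 0 ≤ y) (hxy : 1 ≤ x * y) :
    memKe fun w ↦ w + ∑' n, alexanderLommelCoeff x y n * w ^ (n + 2) := by
  have hgeom : HasSum (fun n : ℕ ↦ (1 / 4 : ℝ) ^ (n + 1)) (1 / 3) := by
    have := (hasSum_geometric_of_lt_one (r := (1 / 4 : ℝ)) (by norm_num) (by norm_num)).mul_left
      (1 / 4)
    simp only [← pow_succ'] at this
    norm_num at this ⊢
    exact this
  have hle := weighted_norm_alexanderLommelCoeff_le hx hy hxy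
  have hs := hgeom.summable.of_nonneg_of_le (fun n ↦ by positivity) hle
  exact memKe_add_tsum_mul_pow hs ((hs.tsum_le_tsum hle hgeom.summable).trans hgeom.tsum_eq.le)

theorem lommel_alexander_exponential_convex_general (μ ν : ℝ)
    (h1 : (μ + 1) * ((μ + 1) * (μ + 3) - ν ^ 2) ≥ 1 / 8)
    (h2 : μ * (2 * Real.exp 1 - 1) -
        (1 / 4) * Real.exp 1 * (Real.exp 1 - 1) * |(μ - 1) ^ 2 - ν ^ 2| ≥
      (Real.exp 1) ^ 3 - (Real.exp 1) ^ 2 + 13 * Real.exp 1 / 4 - 4) :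
    memKe (fun z => z + ∑' n : ℕ, (-1/4 : ℂ) ^ (n + 1) /
      (((n : ℂ) + 2) * poch (((μ - ν + 3) / 2 : ℝ) : ℂ) (n + 1) *
        poch (((μ + ν + 3) / 2 : ℝ) : ℂ) (n + 1)) * z ^ (n + 2)) := by
  have he : 2 < Real.exp 1 := by linarith [Real.add_one_lt_exp one_ne_zero]
  have hμ : 0 < μ := by
    have : 0 ≤ (1 / 4) * Real.exp 1 * (Real.exp 1 - 1) * |(μ - 1) ^ 2 - ν ^ 2| :=
      mul_nonneg (mul_nonneg (by positivity) (by linarith)) (abs_nonneg _)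
    nlinarith
  have hν : ν ^ 2 < (μ + 1) * (μ + 3) := by nlinarith
  obtain ⟨hν_lower, hν_upper⟩ :=
    abs_lt_of_sq_lt_sq' (a := ν) (b := μ + 3) (by nlinarith) (by linarith)
  exact memKe_alexanderLommel (by linarith) (by linarith) (by nlinarith)

/-- Sufficient condition for the Alexander transform
`f_{μ,ν}(z) = ∫₀^z h_{μ,ν}(t)/t dt = z + ∑_{n≥1} ((−1/4)^n / ((n+1)((μ−ν+3)/2)_n ((μ+ν+3)/2)_n)) z^{n+1}`
of the normalized Lommel function to be exponential convex. -/
theorem lommel_alexander_exponential_convex (μ ν : ℝ)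
    (hodd : ∀ k : ℕ, μ + ν ≠ -(2 * (k : ℝ) + 1) ∧ μ - ν ≠ -(2 * (k : ℝ) + 1))
    (h1 : (μ + 1) * ((μ + 1) * (μ + 3) - ν ^ 2) ≥ 1 / 8)
    (h2 : μ * (2 * Real.exp 1 - 1) -
        (1 / 4) * Real.exp 1 * (Real.exp 1 - 1) * |(μ - 1) ^ 2 - ν ^ 2| ≥
      (Real.exp 1) ^ 3 - (Real.exp 1) ^ 2 + 13 * Real.exp 1 / 4 - 4) :
    memKe (fun z => z + ∑' n : ℕ, (-1/4 : ℂ) ^ (n + 1) /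
      (((n : ℂ) + 2) * poch (((μ - ν + 3) / 2 : ℝ) : ℂ) (n + 1) *
        poch (((μ + ν + 3) / 2 : ℝ) : ℂ) (n + 1)) * z ^ (n + 2)) :=
  lommel_alexander_exponential_convex_general μ ν h1 h2
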